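/- arXiv:2206.09004 — 2 statements merged into one kernel-verified Lean document; each statement's English description precedes it below -/
import Mathlib

section
/- There exist a finite alphabet Σ and a PDFA B over Σ that is weakly minimal but not minimal, i.e. no two distinct states of B are ≡-equivalent, yet there exists a PDFA A over Σ with f_A = f_B and strictly fewer states than B. (Converse direction of Proposition 3 fails.) -/
open scoped BigOperators

universe u

/-- A PDFA over alphabet `A`; `Option A` is `A ∪ {$}` with `none` playing the
role of the terminal symbol `$`. -/
structure PDFA (A : Type u) (Q : Type u) [Fintype A] where
  init : Q
  prob : Q → Option A → ℝ
  trans : Q → A → Q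
  prob_nonneg : ∀ q x, 0 ≤ prob q x
  prob_sum : ∀ q, ∑ x : Option A, prob q x = 1

variable {A Q : Type u} [Fintype A]

/-- Extended transition function `τ*`. -/
def tauStar (τ : Q → A → Q) : Q → List A → Q
  | q, [] => q
  | q, σ :: s => tauStar τ (τ q σ) s

/-- `π*(s|q)`, the distribution of the state reached from `q` via `s`. -/
def piStar (M : PDFA A Q) (s : List A) (q : Q) : Option A → ℝ :=
  M.prob (tauStar M.trans q s)

/-- `P(s|q)`, the probability of string `s` from state `q`. -/
noncomputable def Pstr (M : PDFA A Q) : Q → List A → ℝ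
  | q, [] => M.prob q none
  | q, σ :: s => M.prob q (some σ) * Pstr M (M.trans q σ) s

/-- The function computed by the PDFA: `f_A(s) = P(s|q_in)`. -/
noncomputable def fPDFA (M : PDFA A Q) (s : List A) : ℝ := Pstr M M.init s

/-- State equivalence `q ≡ q'`. -/
def StateEquiv (M : PDFA A Q) (q q' : Q) : Prop :=
  ∀ s : List A, piStar M s q = piStar M s q'

/-- The quantization interval `I_κ^n`. -/
def Iquant (κ n : ℕ) : Set ℝ :=
  if n = κ - 1 then Set.Icc ((n : ℝ) / κ) 1
  else Set.Ico ((n : ℝ) / κ) (((n : ℝ) + 1) / κ)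

/-- `x =_κ y` : `x` and `y` lie in the same quantization interval. -/
def qEq (κ : ℕ) (x y : ℝ) : Prop := ∃ n < κ, x ∈ Iquant κ n ∧ y ∈ Iquant κ n

/-- `δ =_κ δ'` for distributions over `Option A`. -/
def distEq (κ : ℕ) (δ δ' : Option A → ℝ) : Prop := ∀ σ, qEq κ (δ σ) (δ' σ)

/-- Quantized state equivalence `q ≡_κ q'`. -/
def StateEquivQ (κ : ℕ) (M : PDFA A Q) (q q' : Q) : Prop :=
  ∀ s : List A, distEq κ (piStar M s q) (piStar M s q')

/-- `q ≈_t q'` : tolerance-based `t`-equality of states. -/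
def tEq (t : ℝ) (M : PDFA A Q) (q q' : Q) : Prop :=
  ∀ (s : List A) (σ : Option A), |piStar M s q σ - piStar M s q' σ| ≤ t

/-- there is a weakly minimal PDFA which is not minimal. -/
theorem stmt7 :
    ∃ (A : Type) (iA : Fintype A) (Q : Type) (B : @PDFA A Q iA),
      Finite Q ∧
      (∀ q q' : Q, q ≠ q' → ¬ @StateEquiv A Q iA B q q') ∧
      ∃ (Q' : Type) (M : @PDFA A Q' iA), Finite Q' ∧
        (∀ s : List A, @fPDFA A Q' iA M s = @fPDFA A Q iA B s) ∧
        Nat.card Q' < Nat.card Q := by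
  classical
  refine ⟨Unit, inferInstance, Bool,
    { init := false
      prob := fun q x => if q = false then (if x = none then 1 else 0)
              else (if x = none then 0 else 1)
      trans := fun _ _ => false
      prob_nonneg := by intro q x; split <;> split <;> norm_num
      prob_sum := by
        intro q
        rw [Fintype.sum_option]
        split <;> simp }, inferInstance, ?_, ?_⟩
  · intro q q' hne hequiv
    have h := congrFun (hequiv []) none
    simp only [piStar, tauStar] at h
    cases q <;> cases q' <;> simp_all
  · refine ⟨Unit,
      { init := ()
        prob := fun _ x => if x = none then 1 else 0
        trans := fun q _ => q
        prob_nonneg := by intro q x; split <;> norm_num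
        prob_sum := by intro q; rw [Fintype.sum_option]; simp }, inferInstance, ?_, ?_⟩
    · intro s
      cases s with
      | nil => simp [fPDFA, Pstr]
      | cons a s => simp [fPDFA, Pstr]
    · simp [Nat.card_eq_fintype_card]
end

section
/- Let B be the PDFA over Σ = {a,b} with states q'₀ (initial), q'₁, q'₂, q'₃, q'₄, where π(q'₀) = ($:0, a:0.1, b:0.9), π(q'₁) = ($:0, a:0.8, b:0.2), π(q'₂) = ($:0.3, a:0.2, b:0.5), π(q'₃) = ($:0, a:0.5, b:0.5), π(q'₄) = ($:0, a:0.9, b:0.1), and τ(q'₀,a)=q'₁, τ(q'₀,b)=q'₃, τ(q'₁,a)=q'₃, τ(q'₁,b)=q'₂, τ(q'₂,a)=q'₄, τ(q'₂,b)=q'₃, τ(q'₃,a)=q'₃, τ(q'₃,b)=q'₃, τ(q'₄,a)=q'₃, τ(q'₄,b)=q'₂. Then B is weakly minimal (no two distinct states of B are ≡-equivalent; indeed π*(λ|q) ≠ π*(λ|q') for all distinct states q, q' of B) but B is not minimal (there exists a 4-state PDFA over {a,b} computing f_B). -/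
open scoped BigOperators

universe u

variable {A Q : Type u} [Fintype A]

/-- States of the PDFA `A` of Fig. 2 (left). -/
inductive QA : Type
  | q0 | q1 | q2 | q3
  deriving DecidableEq

instance instFintypeQA : Fintype QA :=
  ⟨{.q0, .q1, .q2, .q3}, fun x => by cases x <;> simp⟩

/-- States of the PDFA `B` of Fig. 2 (right). -/
inductive QB : Type
  | q0 | q1 | q2 | q3 | q4
  deriving DecidableEq

instance instFintypeQB : Fintype QB :=
  ⟨{.q0, .q1, .q2, .q3, .q4}, fun x => by cases x <;> simp⟩

/-- The alphabet `{a, b}` is encoded as `Bool` with `a := false`, `b := true`;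
`pA` is the next-symbol distribution of `A`. -/
noncomputable def pA : QA → Option Bool → ℝ
  | .q0, none => 0   | .q0, some false => 0.1 | .q0, some true => 0.9
  | .q1, none => 0   | .q1, some false => 0.8 | .q1, some true => 0.2
  | .q2, none => 0.3 | .q2, some false => 0.1 | .q2, some true => 0.6
  | .q3, none => 0   | .q3, some false => 0.5 | .q3, some true => 0.5

/-- The transition function of `A`. -/
def tA : QA → Bool → QA
  | .q0, false => .q1 | .q0, true => .q3
  | .q1, false => .q3 | .q1, true => .q2
  | .q2, false => .q1 | .q2, true => .q3
  | .q3, false => .q3 | .q3, true => .q3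

/-- The next-symbol distribution of `B`. -/
noncomputable def pB : QB → Option Bool → ℝ
  | .q0, none => 0   | .q0, some false => 0.1 | .q0, some true => 0.9
  | .q1, none => 0   | .q1, some false => 0.8 | .q1, some true => 0.2
  | .q2, none => 0.3 | .q2, some false => 0.2 | .q2, some true => 0.5
  | .q3, none => 0   | .q3, some false => 0.5 | .q3, some true => 0.5
  | .q4, none => 0   | .q4, some false => 0.9 | .q4, some true => 0.1

/-- The transition function of `B`. -/
def tB : QB → Bool → QB
  | .q0, false => .q1 | .q0, true => .q3
  | .q1, false => .q3 | .q1, true => .q2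
  | .q2, false => .q4 | .q2, true => .q3
  | .q3, false => .q3 | .q3, true => .q3
  | .q4, false => .q3 | .q4, true => .q2

/-- The PDFA `A` of Fig. 2 (left), with 4 states, computing the same function. -/
noncomputable def MA : PDFA Bool QA where
  init := .q0
  prob := pA
  trans := tA
  prob_nonneg := by
    intro q x
    cases q <;> rcases x with _ | (_ | _) <;> norm_num [pA]
  prob_sum := by
    intro q
    cases q <;> rw [Fintype.sum_option, Fintype.sum_bool] <;> norm_num [pA]

@[simp] lemma MA_prob : MA.prob = pA := rfl
@[simp] lemma MA_trans : MA.trans = tA := rfl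
@[simp] lemma MA_init : MA.init = QA.q0 := rfl

lemma PstrA_q3 (s : List Bool) : Pstr MA QA.q3 s = 0 := by
  induction s with
  | nil => norm_num [Pstr, pA]
  | cons σ s ih => cases σ <;> simp [Pstr, pA, tA, ih]

lemma PstrB_q3 (N : PDFA Bool QB) (hNp : ∀ q x, N.prob q x = pB q x)
    (hNt : ∀ q σ, N.trans q σ = tB q σ) (s : List Bool) :
    Pstr N QB.q3 s = 0 := by
  induction s with
  | nil => norm_num [Pstr, hNp, pB]
  | cons σ s ih => cases σ <;> simp [Pstr, hNp, hNt, pB, tB, ih]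

lemma keyAB (N : PDFA Bool QB) (hNp : ∀ q x, N.prob q x = pB q x)
    (hNt : ∀ q σ, N.trans q σ = tB q σ) (s : List Bool) :
    Pstr MA QA.q0 s = Pstr N QB.q0 s ∧
    Pstr MA QA.q1 s = Pstr N QB.q1 s ∧
    Pstr MA QA.q2 s = Pstr N QB.q2 s ∧
    Pstr N QB.q4 s = 0.5 * Pstr MA QA.q1 s := by
  induction s with
  | nil => norm_num [Pstr, hNp, pB, pA]
  | cons σ s ih =>
    obtain ⟨h0, h1, h2, h4⟩ := ih
    cases σ <;>
      simp [Pstr, hNp, hNt, pB, tB, pA, tA, h0, h1, h2, h4,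
        PstrA_q3, PstrB_q3 N hNp hNt] <;> ring

/-- the PDFA `B` of Fig. 2 is weakly minimal (indeed its states
have pairwise distinct next-symbol distributions) but not minimal. -/
theorem stmt18 (N : PDFA Bool QB)
    (hNi : N.init = QB.q0) (hNp : ∀ q x, N.prob q x = pB q x)
    (hNt : ∀ q σ, N.trans q σ = tB q σ) :
    (∀ q q' : QB, q ≠ q' → piStar N [] q ≠ piStar N [] q') ∧
    (∀ q q' : QB, q ≠ q' → ¬ StateEquiv N q q') ∧
    ∃ (Q' : Type) (M : PDFA Bool Q'), Finite Q' ∧ Nat.card Q' = 4 ∧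
      ∀ s : List Bool, fPDFA M s = fPDFA N s := by
  have hdist : ∀ q q' : QB, q ≠ q' → piStar N [] q ≠ piStar N [] q' := by
    intro q q' hne heq
    have h2 := congrFun heq (some false)
    simp only [piStar, tauStar, hNp] at h2
    cases q <;> cases q' <;> first
      | exact hne rfl
      | norm_num [pB] at h2
  refine ⟨hdist, fun q q' hne h => hdist q q' hne (h []), QA, MA, inferInstance, ?_, ?_⟩
  · simp [Nat.card_eq_fintype_card]; rfl
  · intro s
    have := (keyAB N hNp hNt s).1
    simpa [fPDFA, hNi] using this
end
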